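/- Let C be a dagger category, J a category, Ω a weakly initial class of objects of J, and D : J ⥤ C a diagram. Suppose (L, (l_A)) is a dagger limit of (D, Ω) and (M, (m_A)) is a limit of D, and let f : L ⟶ M be the unique isomorphism of limit cones (i.e. m_A ∘ f = l_A for all objects A of J). Then f is unitary if and only if (M, (m_A)) is itself a dagger limit of (D, Ω). In particular, any two dagger limits of (D, Ω) are related by a unitary isomorphism of cones. -/
import Mathlib


open CategoryTheory

universe v u v₁ u₁ v₂ u₂

class DaggerCategory (C : Type u) [Category.{v} C] where
  dag : ∀ {A B : C}, (A ⟶ B) → (B ⟶ A)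
  dag_id : ∀ (A : C), dag (𝟙 A) = 𝟙 A
  dag_comp : ∀ {A B X : C} (f : A ⟶ B) (g : B ⟶ X), dag (f ≫ g) = dag g ≫ dag f
  dag_dag : ∀ {A B : C} (f : A ⟶ B), dag (dag f) = f

postfix:max "†" => DaggerCategory.dag

section Defs

variable {C : Type u} [Category.{v} C] [DaggerCategory C]

/-- A morphism `f` is a partial isometry if `f ∘ f† ∘ f = f`. -/
def IsPartialIsometry {A B : C} (f : A ⟶ B) : Prop :=
  f ≫ f† ≫ f = f

/-- A morphism `f : A ⟶ B` is unitary if `f† ∘ f = 𝟙 A` and `f ∘ f† = 𝟙 B`. -/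
def IsUnitary {A B : C} (f : A ⟶ B) : Prop :=
  f ≫ f† = 𝟙 A ∧ f† ≫ f = 𝟙 B

/-- A morphism `f` is dagger monic (an isometry) if `f† ∘ f = 𝟙`. -/
def DaggerMonic {A B : C} (f : A ⟶ B) : Prop :=
  f ≫ f† = 𝟙 A

/-- `(L, l)` is a limit cone over the diagram `D`. -/
def IsLimitCone {J : Type u₁} [Category.{v₁} J] (D : J ⥤ C) (L : C)
    (l : ∀ j : J, L ⟶ D.obj j) : Prop :=
  (∀ {j j' : J} (f : j ⟶ j'), l j ≫ D.map f = l j') ∧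
  (∀ (M : C) (m : ∀ j : J, M ⟶ D.obj j),
    (∀ {j j' : J} (f : j ⟶ j'), m j ≫ D.map f = m j') →
    ∃! g : M ⟶ L, ∀ j : J, g ≫ l j = m j)

/-- A class of objects `Ω` is weakly initial when every object admits a morphism
from some member of `Ω`. -/
def WeaklyInitial {J : Type u₁} [Category.{v₁} J] (Ω : Set J) : Prop :=
  ∀ B : J, ∃ A ∈ Ω, Nonempty (A ⟶ B)

/-- `(L, l)` is a dagger limit of `(D, Ω)`: a limit cone whose legs at `Ω` are
partial isometries with pairwise commuting induced projections. -/
def IsDaggerLimit {J : Type u₁} [Category.{v₁} J] (D : J ⥤ C) (Ω : Set J) (L : C)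
    (l : ∀ j : J, L ⟶ D.obj j) : Prop :=
  IsLimitCone D L l ∧
  (∀ j ∈ Ω, IsPartialIsometry (l j)) ∧
  (∀ j ∈ Ω, ∀ j' ∈ Ω,
    (l j ≫ (l j)†) ≫ (l j' ≫ (l j')†) = (l j' ≫ (l j')†) ≫ (l j ≫ (l j)†))

end Defs

section Aux

variable {C : Type u} [Category.{v} C] [DaggerCategory C]

lemma dl_dag_comp {A B X : C} (f : A ⟶ B) (g : B ⟶ X) : (f ≫ g)† = g† ≫ f† :=
  DaggerCategory.dag_comp f g

lemma dl_dag_dag {A B : C} (f : A ⟶ B) : f†† = f := DaggerCategory.dag_dag f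

lemma dl_dag_id (A : C) : (𝟙 A)† = 𝟙 A := DaggerCategory.dag_id A

lemma dl_pi_dag {A B : C} {f : A ⟶ B} (h : f ≫ f† ≫ f = f) : f† ≫ f ≫ f† = f† := by
  have h2 := congrArg (fun z => z†) h
  simp only [dl_dag_comp, dl_dag_dag, Category.assoc] at h2
  exact h2

/-- The key "matrix" computation: with `p = a ≫ a†`, `q = b ≫ b†` partial-isometry
projections that commute, commute through `t`, and with `p ≫ t ≫ a = a`, we get
`a† ≫ t ≫ b = a† ≫ b`. -/
lemma dl_matrix_key {L X Y : C} (a : L ⟶ X) (b : L ⟶ Y) (t : L ⟶ L)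
    (piA : a ≫ a† ≫ a = a) (piB : b ≫ b† ≫ b = b)
    (pcomm : a ≫ a† ≫ b ≫ b† = b ≫ b† ≫ a ≫ a†)
    (h3A : a ≫ a† ≫ t ≫ a = a)
    (h4 : a ≫ a† ≫ t ≫ b ≫ b† = b ≫ b† ≫ t ≫ a ≫ a†) :
    a† ≫ t ≫ b = a† ≫ b := by
  have piA' : a† ≫ a ≫ a† = a† := dl_pi_dag piA
  have R1 : a ≫ a† ≫ t ≫ a ≫ a† = a ≫ a† := by
    calc a ≫ a† ≫ t ≫ a ≫ a† = (a ≫ a† ≫ t ≫ a) ≫ a† := by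
          simp only [Category.assoc]
      _ = a ≫ a† := by rw [h3A]
  have E1 : a ≫ a† ≫ b ≫ b† ≫ t ≫ a ≫ a† ≫ b ≫ b† = a ≫ a† ≫ t ≫ b ≫ b† := by
    rw [← reassoc_of% h4, reassoc_of% piA', reassoc_of% piB]
  have E2 : a ≫ a† ≫ b ≫ b† ≫ t ≫ a ≫ a† ≫ b ≫ b† = a ≫ a† ≫ b ≫ b† := by
    rw [reassoc_of% pcomm, reassoc_of% R1, pcomm, reassoc_of% piB]
  have hur : a ≫ a† ≫ t ≫ b ≫ b† = a ≫ a† ≫ b ≫ b† := E1.symm.trans E2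
  have ins : a† ≫ a ≫ a† ≫ t ≫ b ≫ b† ≫ b = a† ≫ t ≫ b := by
    rw [reassoc_of% piA', piB]
  have ins2 : a† ≫ a ≫ a† ≫ t ≫ b ≫ b† ≫ b = a† ≫ b := by
    rw [reassoc_of% hur, reassoc_of% piA', piB]
  exact ins.symm.trans ins2

end Aux

/-- If `(L, l)` is a dagger limit of `(D, Ω)` and `(M, m)` is a limit of `D`,
the unique isomorphism of limit cones `f : L ⟶ M` is unitary iff `(M, m)` is itself a dagger
limit of `(D, Ω)`; in particular any two dagger limits of `(D, Ω)` are related by a unitary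
isomorphism of cones. -/
theorem daggerLimit_unique {C : Type u} [Category.{v} C] [DaggerCategory C]
    {J : Type u₁} [Category.{v₁} J] (D : J ⥤ C) (Ω : Set J) (hΩ : WeaklyInitial Ω)
    {L M : C} (l : ∀ j : J, L ⟶ D.obj j) (m : ∀ j : J, M ⟶ D.obj j)
    (hL : IsDaggerLimit D Ω L l) (hM : IsLimitCone D M m)
    (f : L ⟶ M) (hf : ∀ j : J, f ≫ m j = l j) :
    (IsUnitary f ↔ IsDaggerLimit D Ω M m) ∧
    (IsDaggerLimit D Ω M m → ∃ u : L ⟶ M, IsUnitary u ∧ ∀ j : J, u ≫ m j = l j) := by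
  obtain ⟨⟨hLcone, hLuniv⟩, hLpi, hLcomm⟩ := hL
  obtain ⟨hMcone, hMuniv⟩ := hM
  -- joint monicity of the legs of each limit
  have monoL : ∀ {Z : C} (x y : Z ⟶ L), (∀ j, x ≫ l j = y ≫ l j) → x = y := by
    intro Z x y hxy
    obtain ⟨e, -, he⟩ := hLuniv Z (fun j => x ≫ l j)
      (fun {j j'} φ => by rw [Category.assoc, hLcone φ])
    rw [he x (fun j => rfl), he y (fun j => (hxy j).symm)]
  have monoM : ∀ {Z : C} (x y : Z ⟶ M), (∀ j, x ≫ m j = y ≫ m j) → x = y := by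
    intro Z x y hxy
    obtain ⟨e, -, he⟩ := hMuniv Z (fun j => x ≫ m j)
      (fun {j j'} φ => by rw [Category.assoc, hMcone φ])
    rw [he x (fun j => rfl), he y (fun j => (hxy j).symm)]
  -- the inverse cone morphism g
  obtain ⟨g, hg, -⟩ := hLuniv M m (fun {j j'} φ => hMcone φ)
  have hfg : f ≫ g = 𝟙 L := monoL (f ≫ g) (𝟙 L)
    (fun j => by rw [Category.assoc, hg, hf, Category.id_comp])
  have hgf : g ≫ f = 𝟙 M := monoM (g ≫ f) (𝟙 M)
    (fun j => by rw [Category.assoc, hf, hg, Category.id_comp])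
  -- forward direction
  have fwd : IsUnitary f → IsDaggerLimit D Ω M m := by
    rintro ⟨h1, h2⟩
    have hm : ∀ j, m j = f† ≫ l j := fun j => by
      rw [← hf j, ← Category.assoc, h2, Category.id_comp]
    refine ⟨⟨fun {j j'} φ => hMcone φ, hMuniv⟩, ?_, ?_⟩
    · intro A hA
      show m A ≫ (m A)† ≫ m A = m A
      rw [hm A]
      simp only [dl_dag_comp, dl_dag_dag, Category.assoc]
      rw [reassoc_of% h1]
      rw [show l A ≫ (l A)† ≫ l A = l A from hLpi A hA]
    · intro A hA B hB
      show (m A ≫ (m A)†) ≫ (m B ≫ (m B)†) = (m B ≫ (m B)†) ≫ (m A ≫ (m A)†)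
      rw [hm A, hm B]
      simp only [dl_dag_comp, dl_dag_dag, Category.assoc]
      rw [reassoc_of% h1, reassoc_of% h1]
      rw [reassoc_of% (hLcomm A hA B hB)]
  -- backward direction
  have bwd : IsDaggerLimit D Ω M m → IsUnitary f := by
    rintro ⟨-, hMpi, hMcomm⟩
    have hmg : ∀ j, m j = g ≫ l j := fun j => (hg j).symm
    have hdg : g† ≫ f† = 𝟙 L := by rw [← dl_dag_comp, hfg, dl_dag_id]
    have cancel_g : ∀ {Z : C} {x y : L ⟶ Z}, g ≫ x = g ≫ y → x = y := by
      intro Z x y h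
      have h2 := congrArg (fun z => f ≫ z) h
      simpa only [← Category.assoc, hfg, Category.id_comp] using h2
    have h3 : ∀ A ∈ Ω, l A ≫ (l A)† ≫ g† ≫ g ≫ l A = l A := by
      intro A hA
      have h := hMpi A hA
      have h' : m A ≫ (m A)† ≫ m A = m A := h
      rw [hmg A] at h'
      simp only [dl_dag_comp, dl_dag_dag, Category.assoc] at h'
      exact cancel_g h'
    have h4 : ∀ A ∈ Ω, ∀ B ∈ Ω,
        l A ≫ (l A)† ≫ g† ≫ g ≫ l B ≫ (l B)† = l B ≫ (l B)† ≫ g† ≫ g ≫ l A ≫ (l A)† := by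
      intro A hA B hB
      have h := hMcomm A hA B hB
      rw [hmg A, hmg B] at h
      simp only [dl_dag_comp, dl_dag_dag, Category.assoc] at h
      have h2 := cancel_g h
      have h3' := congrArg (fun z => z ≫ f†) h2
      simpa only [Category.assoc, hdg, Category.comp_id] using h3'
    have key : ∀ A ∈ Ω, ∀ B ∈ Ω, (l A)† ≫ g† ≫ g ≫ l B = (l A)† ≫ l B := by
      intro A hA B hB
      have := dl_matrix_key (l A) (l B) (g† ≫ g) (hLpi A hA) (hLpi B hB)
        (by simpa only [Category.assoc] using hLcomm A hA B hB)
        (by simpa only [Category.assoc] using h3 A hA)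
        (by simpa only [Category.assoc] using h4 A hA B hB)
      simpa only [Category.assoc] using this
    have hMAT : ∀ A ∈ Ω, ∀ B ∈ Ω, (m A)† ≫ m B = (l A)† ≫ l B := by
      intro A hA B hB
      rw [hmg A, hmg B]
      simp only [dl_dag_comp, dl_dag_dag, Category.assoc]
      exact key A hA B hB
    have vA : ∀ A ∈ Ω, (l A)† ≫ f = (m A)† := by
      intro A hA
      refine monoM _ _ (fun j => ?_)
      obtain ⟨B, hB, ⟨φ⟩⟩ := hΩ j
      calc ((l A)† ≫ f) ≫ m j = (l A)† ≫ f ≫ m j := Category.assoc _ _ _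
        _ = (l A)† ≫ l j := by rw [hf]
        _ = (l A)† ≫ l B ≫ D.map φ := by rw [hLcone φ]
        _ = ((l A)† ≫ l B) ≫ D.map φ := (Category.assoc _ _ _).symm
        _ = ((m A)† ≫ m B) ≫ D.map φ := by rw [hMAT A hA B hB]
        _ = (m A)† ≫ m B ≫ D.map φ := Category.assoc _ _ _
        _ = (m A)† ≫ m j := by rw [hMcone φ]
    have hfd : ∀ A ∈ Ω, f† ≫ l A = m A := by
      intro A hA
      have h2 := congrArg (fun z => z†) (vA A hA)
      simpa only [dl_dag_comp, dl_dag_dag] using h2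
    have hfg' : f† = g := by
      refine monoL _ _ (fun j => ?_)
      obtain ⟨A, hA, ⟨φ⟩⟩ := hΩ j
      calc f† ≫ l j = f† ≫ l A ≫ D.map φ := by rw [hLcone φ]
        _ = (f† ≫ l A) ≫ D.map φ := (Category.assoc _ _ _).symm
        _ = m A ≫ D.map φ := by rw [hfd A hA]
        _ = m j := hMcone φ
        _ = g ≫ l j := (hg j).symm
    exact ⟨by rw [hfg']; exact hfg, by rw [hfg']; exact hgf⟩
  exact ⟨⟨fwd, bwd⟩, fun hMd => ⟨f, bwd hMd, hf⟩⟩
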